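/- arXiv:2107.02721 — 2 statements merged into one kernel-verified Lean document; each statement's English description precedes it below -/
import Mathlib

section
/- Let φ: G → G̃ be a continuous homomorphism of topological groups, let L ≤ G and L̃ ≤ H̃ ≤ G̃ be closed subgroups with φ(L) ≤ H̃, and suppose L̃ acts continuously on a topological space X. Then the map κ sending (gL, g̃ ⊗ x) to g ⊗ φ(g)⁻¹g̃ ⊗ x is a well-defined homeomorphism from the fiber product (G/L) ×_{G̃/H̃} G̃, balanced over L̃ with X, to G ⊗_L H̃ ⊗_{L̃} X. -/
/-- The map `G ⧸ L → G' ⧸ H'` induced by a homomorphism `φ : G → G'` with `φ(L) ≤ H'`,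
sending `gL` to `φ(g)H'`. -/
def cosetMap {G G' : Type*} [Group G] [Group G'] (φ : G →* G') (L : Subgroup G)
    (H' : Subgroup G') (h : L ≤ H'.comap φ) : G ⧸ L → G' ⧸ H' :=
  Quotient.map' (fun g => φ g) (fun a b hab => by
    rw [QuotientGroup.leftRel_apply] at *
    simpa using h hab)

/-- The total space of the fiber product `(G ⧸ L) ×_{G' ⧸ H'} G'` crossed with `X`:
triples `(gL, g', x)` such that the image of `gL` in `G' ⧸ H'` equals `g'H'`. -/
def FiberProdTotal {G G' : Type*} [Group G] [Group G'] (φ : G →* G') (L : Subgroup G)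
    (H' : Subgroup G') (hLH' : L ≤ H'.comap φ) (X : Type*) : Type _ :=
  {p : (G ⧸ L) × G' × X // cosetMap φ L H' hLH' p.1 = QuotientGroup.mk p.2.1}

instance {G G' : Type*} [Group G] [Group G'] [TopologicalSpace G] [TopologicalSpace G']
    (φ : G →* G') (L : Subgroup G) (H' : Subgroup G') (hLH' : L ≤ H'.comap φ)
    (X : Type*) [TopologicalSpace X] : TopologicalSpace (FiberProdTotal φ L H' hLH' X) :=
  instTopologicalSpaceSubtype

/-- The balancing relation over `L'` on the fiber product crossed with `X`:
`((gL, g' * l'), x) ~ ((gL, g'), l' • x)`. -/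
def srcRel {G G' : Type*} [Group G] [Group G'] (φ : G →* G') (L : Subgroup G)
    (H' L' : Subgroup G') (hLH' : L ≤ H'.comap φ) (X : Type*) [MulAction L' X] :
    FiberProdTotal φ L H' hLH' X → FiberProdTotal φ L H' hLH' X → Prop :=
  fun a b => ∃ l' : L', a.1.1 = b.1.1 ∧ a.1.2.1 = b.1.2.1 * (l' : G') ∧
    l' • a.1.2.2 = b.1.2.2

/-- The source space `((G/L) ×_{G'/H'} G') ⊗_{L'} X`. -/
def SrcSpace {G G' : Type*} [Group G] [Group G'] [TopologicalSpace G] [TopologicalSpace G']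
    (φ : G →* G') (L : Subgroup G) (H' L' : Subgroup G') (hLH' : L ≤ H'.comap φ)
    (X : Type*) [TopologicalSpace X] [MulAction L' X] : Type _ :=
  Quotient (Relation.EqvGen.setoid (srcRel φ L H' L' hLH' X))

instance {G G' : Type*} [Group G] [Group G'] [TopologicalSpace G] [TopologicalSpace G']
    (φ : G →* G') (L : Subgroup G) (H' L' : Subgroup G') (hLH' : L ≤ H'.comap φ)
    (X : Type*) [TopologicalSpace X] [MulAction L' X] :
    TopologicalSpace (SrcSpace φ L H' L' hLH' X) := instTopologicalSpaceQuotient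

/-- The relation on `G × H' × X` defining the iterated balanced product
`G ⊗_L H' ⊗_{L'} X`:  `(g·l, h, x) ~ (g, φ(l)·h, x)` for `l ∈ L` and
`(g, h·l', x) ~ (g, h, l' • x)` for `l' ∈ L'`. -/
def tgtRel {G G' : Type*} [Group G] [Group G'] (φ : G →* G') (L : Subgroup G)
    (H' L' : Subgroup G') (hLH' : L ≤ H'.comap φ) (hL'H' : L' ≤ H')
    (X : Type*) [MulAction L' X] :
    G × H' × X → G × H' × X → Prop :=
  fun a b =>
    (∃ l : L, a.1 = b.1 * (l : G) ∧ (⟨φ (l : G), hLH' l.2⟩ : H') * a.2.1 = b.2.1 ∧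
      a.2.2 = b.2.2) ∨
    (∃ l' : L', a.1 = b.1 ∧ a.2.1 = b.2.1 * (⟨(l' : G'), hL'H' l'.2⟩ : H') ∧
      l' • a.2.2 = b.2.2)

/-- The target space `G ⊗_L H' ⊗_{L'} X`. -/
def TgtSpace {G G' : Type*} [Group G] [Group G'] [TopologicalSpace G] [TopologicalSpace G']
    (φ : G →* G') (L : Subgroup G) (H' L' : Subgroup G') (hLH' : L ≤ H'.comap φ)
    (hL'H' : L' ≤ H') (X : Type*) [TopologicalSpace X] [MulAction L' X] : Type _ :=
  Quotient (Relation.EqvGen.setoid (tgtRel φ L H' L' hLH' hL'H' X))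

instance {G G' : Type*} [Group G] [Group G'] [TopologicalSpace G] [TopologicalSpace G']
    (φ : G →* G') (L : Subgroup G) (H' L' : Subgroup G') (hLH' : L ≤ H'.comap φ)
    (hL'H' : L' ≤ H') (X : Type*) [TopologicalSpace X] [MulAction L' X] :
    TopologicalSpace (TgtSpace φ L H' L' hLH' hL'H' X) := instTopologicalSpaceQuotient


section Aux

open Topology

private theorem eqvGen_lift' {α : Type*} {β : Sort*} {r : α → α → Prop} {f : α → β}
    (h : ∀ a b, r a b → f a = f b) :
    ∀ a b, Relation.EqvGen r a b → f a = f b := by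
  intro a b hab
  induction hab with
  | rel x y hxy => exact h x y hxy
  | refl x => rfl
  | symm x y _ ih => exact ih.symm
  | trans x y z _ _ ih1 ih2 => exact ih1.trans ih2

private theorem isOpenQuotientMap_restrictPreimage' {A B : Type*} [TopologicalSpace A]
    [TopologicalSpace B] {f : A → B} (hf : IsOpenQuotientMap f) (T : Set B) :
    IsOpenQuotientMap (T.restrictPreimage f) := by
  refine ⟨T.restrictPreimage_surjective hf.surjective, hf.continuous.restrictPreimage, ?_⟩
  intro U hU
  obtain ⟨V, hV, rfl⟩ := isOpen_induced_iff.mp hU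
  have himg : T.restrictPreimage f '' (Subtype.val ⁻¹' V) = Subtype.val ⁻¹' (f '' V) := by
    ext ⟨y, hy⟩
    constructor
    · rintro ⟨⟨x, hx⟩, hxV, h⟩
      exact ⟨x, hxV, congrArg Subtype.val h⟩
    · rintro ⟨x, hxV, hxy⟩
      have hxT : x ∈ f ⁻¹' T := by rw [Set.mem_preimage, hxy]; exact hy
      exact ⟨⟨x, hxT⟩, hxV, Subtype.ext hxy⟩
  rw [himg]
  exact (hf.isOpenMap V hV).preimage continuous_subtype_val

variable {G G' : Type*} [Group G] [Group G'] (φ : G →* G') (L : Subgroup G)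
  (H' L' : Subgroup G') (hLH' : L ≤ H'.comap φ) (hL'H' : L' ≤ H')
  (X : Type*) [MulAction L' X]

private theorem cosetMap_mk_iff (g : G) (g' : G') :
    cosetMap φ L H' hLH' (QuotientGroup.mk g) = QuotientGroup.mk g' ↔ (φ g)⁻¹ * g' ∈ H' := by
  have h1 : cosetMap φ L H' hLH' (QuotientGroup.mk g) = QuotientGroup.mk (φ g) := rfl
  rw [h1, QuotientGroup.eq]

variable [TopologicalSpace G] [TopologicalSpace G'] [TopologicalSpace X]

open Classical in
private noncomputable def fwdFunQ (g' : G') (x : X) : G ⧸ L → TgtSpace φ L H' L' hLH' hL'H' X := fun q =>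
  Quotient.liftOn' q
    (fun g =>
      if h : (φ g)⁻¹ * g' ∈ H' then
        Quotient.mk _ (g, (⟨(φ g)⁻¹ * g', h⟩ : H'), x)
      else Quotient.mk _ (1, 1, x))
    (fun a b hab => by
      have hab' : a⁻¹ * b ∈ L := QuotientGroup.leftRel_apply.mp hab
      have hmem : φ (a⁻¹ * b) ∈ H' := hLH' hab'
      have hb : b = a * (a⁻¹ * b) := by group
      have hφb : φ b = φ a * φ (a⁻¹ * b) := by rw [← map_mul, mul_inv_cancel_left]
      have hiff : ((φ b)⁻¹ * g' ∈ H') ↔ ((φ a)⁻¹ * g' ∈ H') := by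
        rw [hφb, mul_inv_rev, mul_assoc]
        exact mul_mem_cancel_left (H'.inv_mem hmem)
      by_cases h : (φ a)⁻¹ * g' ∈ H'
      · refine (dif_pos h).trans (Eq.trans ?_ (dif_pos (hiff.mpr h)).symm)
        refine Eq.symm (Quotient.sound ?_)
        refine Relation.EqvGen.rel _ _ ?_
        refine Or.inl ⟨⟨a⁻¹ * b, hab'⟩, ?_, ?_, rfl⟩
        · simpa using hb
        · ext
          show φ (a⁻¹ * b) * ((φ b)⁻¹ * g') = (φ a)⁻¹ * g'
          rw [hφb]
          group
      · exact (dif_neg h).trans (Eq.symm (by exact dif_neg (fun hc => h (hiff.mp hc)))))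

private theorem fwdFunQ_mk (g' : G') (x : X) (g : G) (h : (φ g)⁻¹ * g' ∈ H') :
    fwdFunQ φ L H' L' hLH' hL'H' X g' x (QuotientGroup.mk g) =
      Quotient.mk _ (g, (⟨(φ g)⁻¹ * g', h⟩ : ↥H'), x) := by
  show Quotient.liftOn' (Quotient.mk'' g) _ _ = _
  rw [Quotient.liftOn'_mk'']
  exact dif_pos h

/-- The forward map `κ`. -/
private noncomputable def fwdQ : SrcSpace φ L H' L' hLH' X → TgtSpace φ L H' L' hLH' hL'H' X :=
  Quotient.lift
    (fun p : FiberProdTotal φ L H' hLH' X =>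
      fwdFunQ φ L H' L' hLH' hL'H' X p.1.2.1 p.1.2.2 p.1.1)
    (fun a b hab => by
      refine eqvGen_lift' (f := fun p : FiberProdTotal φ L H' hLH' X =>
        fwdFunQ φ L H' L' hLH' hL'H' X p.1.2.1 p.1.2.2 p.1.1) ?_ a b hab
      rintro a b ⟨l', h1, h2, h3⟩
      obtain ⟨g, hg⟩ := QuotientGroup.mk_surjective b.1.1
      have ha1 : a.1.1 = QuotientGroup.mk g := by rw [h1, hg]
      have hmb : (φ g)⁻¹ * b.1.2.1 ∈ H' :=
        (cosetMap_mk_iff φ L H' hLH' g b.1.2.1).mp (by rw [hg]; exact b.2)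
      have hma : (φ g)⁻¹ * a.1.2.1 ∈ H' :=
        (cosetMap_mk_iff φ L H' hLH' g a.1.2.1).mp (by rw [← ha1]; exact a.2)
      show fwdFunQ φ L H' L' hLH' hL'H' X a.1.2.1 a.1.2.2 a.1.1 =
        fwdFunQ φ L H' L' hLH' hL'H' X b.1.2.1 b.1.2.2 b.1.1
      rw [ha1, ← hg]
      rw [fwdFunQ_mk φ L H' L' hLH' hL'H' X a.1.2.1 a.1.2.2 g hma,
        fwdFunQ_mk φ L H' L' hLH' hL'H' X b.1.2.1 b.1.2.2 g hmb]
      refine Quotient.sound ?_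
      refine Relation.EqvGen.rel _ _ ?_
      refine Or.inr ⟨l', rfl, ?_, h3⟩
      ext
      simp [h2, mul_assoc])

/-- The inverse map on representatives. -/
private def bwdAux : G × ↥H' × X → SrcSpace φ L H' L' hLH' X := fun p =>
  Quotient.mk _
    (⟨((QuotientGroup.mk p.1 : G ⧸ L), φ p.1 * (p.2.1 : G'), p.2.2),
      (cosetMap_mk_iff φ L H' hLH' p.1 _).mpr
        (by simpa using p.2.1.2)⟩ : FiberProdTotal φ L H' hLH' X)

/-- The inverse map. -/
private def bwdQ : TgtSpace φ L H' L' hLH' hL'H' X → SrcSpace φ L H' L' hLH' X :=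
  Quotient.lift (bwdAux φ L H' L' hLH' X)
    (fun a b hab => by
      refine eqvGen_lift' ?_ a b hab
      rintro a b (⟨l, h1, h2, h3⟩ | ⟨l', h1, h2, h3⟩)
      · refine congrArg (Quotient.mk (Relation.EqvGen.setoid (srcRel φ L H' L' hLH' X)))
          (Subtype.ext ?_)
        refine Prod.ext ?_ (Prod.ext ?_ h3)
        · show (QuotientGroup.mk a.1 : G ⧸ L) = QuotientGroup.mk b.1
          rw [h1]
          exact QuotientGroup.mk_mul_of_mem b.1 l.2
        · show φ a.1 * (a.2.1 : G') = φ b.1 * (b.2.1 : G')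
          rw [h1, ← h2]
          simp [mul_assoc]
      · refine Quotient.sound ?_
        refine Relation.EqvGen.rel _ _ ?_
        refine ⟨l', ?_, ?_, h3⟩
        · show (QuotientGroup.mk a.1 : G ⧸ L) = QuotientGroup.mk b.1
          rw [h1]
        · show φ a.1 * (a.2.1 : G') = φ b.1 * (b.2.1 : G') * (l' : G')
          rw [h1, h2]
          simp [mul_assoc])


variable [IsTopologicalGroup G] [IsTopologicalGroup G']

private theorem continuous_bwdQ (hφ : Continuous φ) :
    Continuous (bwdQ φ L H' L' hLH' hL'H' X) := by
  refine Continuous.quotient_lift ?_ _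
  exact continuous_quot_mk.comp
    (Continuous.subtype_mk
      ((continuous_quot_mk.comp continuous_fst).prodMk
        (((hφ.comp continuous_fst).mul
          (continuous_subtype_val.comp (continuous_fst.comp continuous_snd))).prodMk
          (continuous_snd.comp continuous_snd))) _)

private theorem continuous_fwdQ (hφ : Continuous φ) :
    Continuous (fwdQ φ L H' L' hLH' hL'H' X) := by
  let T : Set ((G ⧸ L) × G' × X) :=
    {p | cosetMap φ L H' hLH' p.1 = QuotientGroup.mk p.2.1}
  let m : G × G' × X → (G ⧸ L) × G' × X :=
    Prod.map (QuotientGroup.mk (s := L)) (id : G' × X → G' × X)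
  have hm : IsOpenQuotientMap m :=
    QuotientGroup.isOpenQuotientMap_mk.prodMap IsOpenQuotientMap.id
  have hres : IsOpenQuotientMap (T.restrictPreimage m) :=
    isOpenQuotientMap_restrictPreimage' hm T
  have hπ : IsQuotientMap
      ((Quotient.mk (Relation.EqvGen.setoid (srcRel φ L H' L' hLH' X))) ∘
        (T.restrictPreimage m)) :=
    IsQuotientMap.comp
      (@isQuotientMap_quotient_mk' _ _ (Relation.EqvGen.setoid (srcRel φ L H' L' hLH' X)))
      hres.isQuotientMap
  refine hπ.continuous_iff.mpr ?_
  have hq : ∀ q : ↥(m ⁻¹' T), (φ q.1.1)⁻¹ * q.1.2.1 ∈ H' := fun q =>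
    (cosetMap_mk_iff φ L H' hLH' q.1.1 q.1.2.1).mp q.2
  have hkey : (fwdQ φ L H' L' hLH' hL'H' X) ∘
      ((Quotient.mk (Relation.EqvGen.setoid (srcRel φ L H' L' hLH' X))) ∘
        (T.restrictPreimage m)) =
      fun q : ↥(m ⁻¹' T) =>
        Quotient.mk (Relation.EqvGen.setoid (tgtRel φ L H' L' hLH' hL'H' X))
          (q.1.1, (⟨(φ q.1.1)⁻¹ * q.1.2.1, hq q⟩ : ↥H'), q.1.2.2) := by
    funext q
    exact fwdFunQ_mk φ L H' L' hLH' hL'H' X q.1.2.1 q.1.2.2 q.1.1 (hq q)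
  refine (continuous_congr (congrFun hkey)).mpr ?_
  have c1 : Continuous (fun q : ↥(m ⁻¹' T) => q.1.1) :=
    continuous_fst.comp continuous_subtype_val
  have c2 : Continuous (fun q : ↥(m ⁻¹' T) => q.1.2.1) :=
    continuous_fst.comp (continuous_snd.comp continuous_subtype_val)
  have c3 : Continuous (fun q : ↥(m ⁻¹' T) => q.1.2.2) :=
    continuous_snd.comp (continuous_snd.comp continuous_subtype_val)
  exact continuous_quot_mk.comp
    (c1.prodMk ((((hφ.comp c1).inv.mul c2).subtype_mk _).prodMk c3))

end Aux

/-- Let `φ : G → G'` be a continuous homomorphism of topological groups, `L ≤ G` and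
`L' ≤ H' ≤ G'` closed subgroups with `φ(L) ≤ H'`, and let `L'` act continuously on a space
`X`.  Then the map `κ : (gL, g' ⊗ x) ↦ g ⊗ φ(g)⁻¹ g' ⊗ x` is a well-defined homeomorphism
from the fiber product `(G/L) ×_{G'/H'} G'` balanced over `L'` with `X` to
`G ⊗_L H' ⊗_{L'} X`. -/
theorem fiberProduct_balanced_homeomorph
    {G G' : Type*} [Group G] [TopologicalSpace G] [IsTopologicalGroup G]
    [Group G'] [TopologicalSpace G'] [IsTopologicalGroup G']
    (φ : G →* G') (hφ : Continuous φ)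
    (L : Subgroup G) (H' L' : Subgroup G')
    (hLH' : L ≤ H'.comap φ) (hL'H' : L' ≤ H')
    (hLclosed : IsClosed (L : Set G)) (hH'closed : IsClosed (H' : Set G'))
    (hL'closed : IsClosed (L' : Set G'))
    (X : Type*) [TopologicalSpace X] [MulAction L' X] [ContinuousSMul L' X] :
    ∃ e : SrcSpace φ L H' L' hLH' X ≃ₜ TgtSpace φ L H' L' hLH' hL'H' X,
      ∀ (g : G) (g' : G') (x : X)
        (hc : cosetMap φ L H' hLH' (QuotientGroup.mk g) = QuotientGroup.mk g')
        (hm : (φ g)⁻¹ * g' ∈ H'),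
        e (Quotient.mk _ ⟨((QuotientGroup.mk g : G ⧸ L), g', x), hc⟩) =
          Quotient.mk _ (g, (⟨(φ g)⁻¹ * g', hm⟩ : H'), x) := by
  refine ⟨⟨⟨fwdQ φ L H' L' hLH' hL'H' X, bwdQ φ L H' L' hLH' hL'H' X, ?_, ?_⟩, ?_, ?_⟩, ?_⟩
  · intro s
    refine Quotient.inductionOn s ?_
    rintro ⟨⟨q, g', x⟩, hp⟩
    obtain ⟨g, rfl⟩ := QuotientGroup.mk_surjective q
    have hm' : (φ g)⁻¹ * g' ∈ H' := (cosetMap_mk_iff φ L H' hLH' g g').mp hp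
    show bwdQ φ L H' L' hLH' hL'H' X
      (fwdFunQ φ L H' L' hLH' hL'H' X g' x (QuotientGroup.mk g)) = _
    rw [fwdFunQ_mk φ L H' L' hLH' hL'H' X g' x g hm']
    refine congrArg (Quotient.mk _) (Subtype.ext ?_)
    refine Prod.ext rfl (Prod.ext ?_ rfl)
    show φ g * ((φ g)⁻¹ * g') = g'
    exact mul_inv_cancel_left _ _
  · intro t
    refine Quotient.inductionOn t ?_
    rintro ⟨g, h', x⟩
    have hm' : (φ g)⁻¹ * (φ g * (h' : G')) ∈ H' := by simpa using h'.2
    show fwdFunQ φ L H' L' hLH' hL'H' X (φ g * (h' : G')) x (QuotientGroup.mk g) = _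
    rw [fwdFunQ_mk φ L H' L' hLH' hL'H' X _ x g hm']
    refine congrArg (Quotient.mk _) ?_
    refine Prod.ext rfl (Prod.ext ?_ rfl)
    ext
    show (φ g)⁻¹ * (φ g * (h' : G')) = (h' : G')
    exact inv_mul_cancel_left _ _
  · exact continuous_fwdQ φ L H' L' hLH' hL'H' X hφ
  · exact continuous_bwdQ φ L H' L' hLH' hL'H' X hφ
  · intro g g' x hc hm
    show fwdFunQ φ L H' L' hLH' hL'H' X g' x (QuotientGroup.mk g) = _
    exact fwdFunQ_mk φ L H' L' hLH' hL'H' X g' x g hm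
end

section
/- Given indexed families of topological groups Kⱼ with homomorphisms Kⱼ → Mⱼ and Kⱼ → Nⱼ and actions of Kⱼ on the right on Mⱼ and on the left on Nⱼ through these homomorphisms, there is a natural homeomorphism (∏ⱼ Mⱼ) ⊗_{∏ⱼ Kⱼ} (∏ⱼ Nⱼ) ≅ ∏ⱼ (Mⱼ ⊗_{Kⱼ} Nⱼ). -/
/-- The balanced-product relation on `M × N` for homomorphisms `f : K →* M`, `g : K →* N`:
`K` acts on the right on `M` through `f` and on the left on `N` through `g`, and we identify
`(x * f k, y)` with `(x, g k * y)`. -/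
def balRel {K M N : Type*} [Group K] [Group M] [Group N] (f : K →* M) (g : K →* N) :
    M × N → M × N → Prop :=
  fun p q => ∃ k : K, p.1 = q.1 * f k ∧ g k * p.2 = q.2

/-- The balanced product `M ⊗_K N` (quotient of `M × N` by `(x · k, y) ~ (x, k · y)`). -/
def BalProd {K M N : Type*} [Group K] [Group M] [Group N]
    [TopologicalSpace M] [TopologicalSpace N] (f : K →* M) (g : K →* N) : Type _ :=
  Quotient (Relation.EqvGen.setoid (balRel f g))

instance {K M N : Type*} [Group K] [Group M] [Group N]
    [TopologicalSpace M] [TopologicalSpace N] (f : K →* M) (g : K →* N) :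
    TopologicalSpace (BalProd f g) := instTopologicalSpaceQuotient

/-- The coordinate-wise product of a family of group homomorphisms. -/
def piHom {ι : Type*} {K A : ι → Type*} [∀ j, Group (K j)] [∀ j, Group (A j)]
    (f : ∀ j, K j →* A j) : (∀ j, K j) →* (∀ j, A j) :=
  MonoidHom.mk' (fun k j => f j (k j)) (fun a b => by funext j; exact map_mul (f j) _ _)

section Aux

variable {K M N : Type*} [Group K] [Group M] [Group N]
  [TopologicalSpace M] [TopologicalSpace N] [IsTopologicalGroup M] [IsTopologicalGroup N]
  (f : K →* M) (g : K →* N)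

set_option linter.unusedSectionVars false

theorem balRel_equivalence : Equivalence (balRel f g) := by
  constructor
  · intro p; exact ⟨1, by simp, by simp⟩
  · rintro p q ⟨k, h1, h2⟩
    exact ⟨k⁻¹, by simp [h1], by simp [← h2]⟩
  · rintro p q r ⟨k, h1, h2⟩ ⟨l, h3, h4⟩
    refine ⟨l * k, ?_, ?_⟩
    · simp [h1, h3, mul_assoc]
    · simp [← h4, ← h2, mul_assoc]

/-- The quotient map onto the balanced product. -/
def balMk : M × N → BalProd f g := Quotient.mk _

theorem balMk_eq_iff {p q : M × N} : balMk f g p = balMk f g q ↔ balRel f g p q := by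
  constructor
  · intro h
    exact (balRel_equivalence f g).eqvGen_iff.1 (Quotient.exact h)
  · intro h
    exact Quotient.sound (Relation.EqvGen.rel _ _ h)

theorem continuous_balMk : Continuous (balMk f g) := continuous_quotient_mk'

theorem isOpenMap_balMk : IsOpenMap (balMk f g) := by
  intro U hU
  change IsOpen (balMk f g ⁻¹' (balMk f g '' U))
  have : balMk f g ⁻¹' (balMk f g '' U) =
      ⋃ k : K, (fun p : M × N => (p.1 * (f k)⁻¹, g k * p.2)) ⁻¹' U := by
    ext ⟨x, y⟩
    simp only [Set.mem_preimage, Set.mem_image, Set.mem_iUnion]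
    constructor
    · rintro ⟨⟨u, v⟩, hu, he⟩
      obtain ⟨k, h1, h2⟩ := (balMk_eq_iff f g).1 he.symm
      refine ⟨k, ?_⟩
      simp only [Set.mem_preimage] at *
      have : (x * (f k)⁻¹, g k * y) = (u, v) := by
        have h1' : x = u * f k := h1
        have h2' : g k * y = v := h2
        exact Prod.ext (by rw [h1', mul_inv_cancel_right]) h2'
      rwa [this]
    · rintro ⟨k, hk⟩
      refine ⟨(x * (f k)⁻¹, g k * y), hk, ?_⟩
      rw [balMk_eq_iff]
      exact ⟨k⁻¹, by simp, by simp [← mul_assoc]⟩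
  rw [this]
  refine isOpen_iUnion fun k => ?_
  have hcont : Continuous fun p : M × N => (p.1 * (f k)⁻¹, g k * p.2) :=
    ((continuous_fst.mul continuous_const).prodMk (continuous_const.mul continuous_snd))
  exact hcont.isOpen_preimage U hU

theorem isOpenQuotientMap_balMk : IsOpenQuotientMap (balMk f g) :=
  ⟨Quotient.mk''_surjective, continuous_balMk f g, isOpenMap_balMk f g⟩

end Aux

/-- The homeomorphism `(∏ Mⱼ) × (∏ Nⱼ) ≃ₜ ∏ (Mⱼ × Nⱼ)`. -/
def prodPiHomeomorph {ι : Type*} (M N : ι → Type*)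
    [∀ j, TopologicalSpace (M j)] [∀ j, TopologicalSpace (N j)] :
    ((∀ j, M j) × (∀ j, N j)) ≃ₜ (∀ j, M j × N j) where
  toFun p j := (p.1 j, p.2 j)
  invFun q := (fun j => (q j).1, fun j => (q j).2)
  left_inv p := rfl
  right_inv q := rfl
  continuous_toFun := continuous_pi fun j =>
    ((continuous_apply j).comp continuous_fst).prodMk ((continuous_apply j).comp continuous_snd)
  continuous_invFun :=
    (continuous_pi fun j => continuous_fst.comp (continuous_apply j)).prodMk
      (continuous_pi fun j => continuous_snd.comp (continuous_apply j))

/-- Given indexed families of topological groups `Kⱼ` with homomorphisms `Kⱼ → Mⱼ` and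
`Kⱼ → Nⱼ`, acting on the right on `Mⱼ` and on the left on `Nⱼ` through these homomorphisms,
there is a natural homeomorphism
`(∏ⱼ Mⱼ) ⊗_{∏ⱼ Kⱼ} (∏ⱼ Nⱼ) ≅ ∏ⱼ (Mⱼ ⊗_{Kⱼ} Nⱼ)`,
where the product group acts diagonally coordinate-wise. -/
theorem balancedProduct_pi_homeomorph
    {ι : Type*} (K M N : ι → Type*)
    [∀ j, Group (K j)] [∀ j, Group (M j)] [∀ j, Group (N j)]
    [∀ j, TopologicalSpace (K j)] [∀ j, TopologicalSpace (M j)] [∀ j, TopologicalSpace (N j)]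
    [∀ j, IsTopologicalGroup (K j)] [∀ j, IsTopologicalGroup (M j)] [∀ j, IsTopologicalGroup (N j)]
    (f : ∀ j, K j →* M j) (g : ∀ j, K j →* N j)
    (hf : ∀ j, Continuous (f j)) (hg : ∀ j, Continuous (g j)) :
    ∃ e : BalProd (piHom f) (piHom g) ≃ₜ (∀ j, BalProd (f j) (g j)),
      ∀ (x : ∀ j, M j) (y : ∀ j, N j),
        e (Quotient.mk _ (x, y)) = fun j => Quotient.mk _ (x j, y j) := by
  classical
  -- the map on representatives
  set F0 : ((∀ j, M j) × (∀ j, N j)) → ∀ j, BalProd (f j) (g j) :=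
    fun p j => balMk (f j) (g j) (p.1 j, p.2 j) with hF0
  -- well-definedness
  have hwd : ∀ p q, Relation.EqvGen (balRel (piHom f) (piHom g)) p q → F0 p = F0 q := by
    intro p q h
    have h' : balRel (piHom f) (piHom g) p q :=
      (balRel_equivalence (piHom f) (piHom g)).eqvGen_iff.1 h
    obtain ⟨k, h1, h2⟩ := h'
    funext j
    rw [hF0]
    rw [balMk_eq_iff]
    exact ⟨k j, congrFun h1 j, congrFun h2 j⟩
  set F : BalProd (piHom f) (piHom g) → ∀ j, BalProd (f j) (g j) :=
    Quotient.lift F0 hwd with hF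
  have hFmk : ∀ p, F (balMk (piHom f) (piHom g) p) = F0 p := fun p => rfl
  -- F is bijective
  have hinj : Function.Injective F := by
    intro a b hab
    obtain ⟨p, rfl⟩ := Quotient.exists_rep a
    obtain ⟨q, rfl⟩ := Quotient.exists_rep b
    have : ∀ j, balRel (f j) (g j) (p.1 j, p.2 j) (q.1 j, q.2 j) := by
      intro j
      rw [← balMk_eq_iff]
      exact congrFun hab j
    choose k h1 h2 using this
    have : balRel (piHom f) (piHom g) p q :=
      ⟨k, funext fun j => h1 j, funext fun j => h2 j⟩
    exact Quotient.sound (Relation.EqvGen.rel _ _ this)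
  have hsurj : Function.Surjective F := by
    intro z
    have : ∀ j, ∃ p : M j × N j, balMk (f j) (g j) p = z j :=
      fun j => Quotient.exists_rep (z j)
    choose p hp using this
    exact ⟨balMk (piHom f) (piHom g) (fun j => (p j).1, fun j => (p j).2),
      funext fun j => hp j⟩
  -- F is continuous
  have hcont : Continuous F := by
    rw [hF]
    apply Continuous.quotient_lift
    rw [hF0]
    exact continuous_pi fun j => (continuous_balMk (f j) (g j)).comp
      (((continuous_apply j).comp continuous_fst).prodMk
        ((continuous_apply j).comp continuous_snd))
  -- F is open
  have hopen : IsOpenMap F := by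
    intro U hU
    have hq := isOpenQuotientMap_balMk (piHom f) (piHom g)
    have hsurjq : Function.Surjective (balMk (piHom f) (piHom g)) := hq.1
    have : F '' U = (Pi.map (fun j => balMk (f j) (g j))) ''
        ((prodPiHomeomorph M N) '' (balMk (piHom f) (piHom g) ⁻¹' U)) := by
      calc F '' U = F '' (balMk (piHom f) (piHom g) ''
              (balMk (piHom f) (piHom g) ⁻¹' U)) := by
            rw [Set.image_preimage_eq U hsurjq]
        _ = (F ∘ balMk (piHom f) (piHom g)) ''
              (balMk (piHom f) (piHom g) ⁻¹' U) := (Set.image_comp _ _ _).symm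
        _ = ((Pi.map (fun j => balMk (f j) (g j))) ∘ (prodPiHomeomorph M N)) ''
              (balMk (piHom f) (piHom g) ⁻¹' U) := rfl
        _ = _ := Set.image_comp _ _ _
    rw [this]
    have hU' : IsOpen (balMk (piHom f) (piHom g) ⁻¹' U) := hq.2.isOpen_preimage U hU
    exact (IsOpenQuotientMap.piMap fun j => isOpenQuotientMap_balMk (f j) (g j)).3 _
      ((prodPiHomeomorph M N).isOpenMap _ hU')
  refine ⟨Equiv.toHomeomorphOfContinuousOpen (Equiv.ofBijective F ⟨hinj, hsurj⟩)
    hcont hopen, ?_⟩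
  intro x y
  rfl
end
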